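/- arXiv:1609.01197 — 4 statements merged into one kernel-verified Lean document; each statement's English description precedes it below -/
import Mathlib

section
/- (q-stuffle in depth one) For 0 < q < 1 and integers i, j ≥ 2, ζ_q(i) ζ_q(j) = ζ_q(i,j) + ζ_q(j,i) + ζ_q(i+j) + (1-q) ζ_q(i+j-1). -/
open scoped BigOperators

/-- The q-integer [m] = (1-q^m)/(1-q). -/
noncomputable def qint (q : ℝ) (m : ℕ) : ℝ := (1 - q ^ m) / (1 - q)

/-- Depth-one q-zeta value ζ_q(k) = Σ_{m≥1} q^{(k-1)m}/[m]^k. -/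
noncomputable def zetaQ (q : ℝ) (k : ℕ) : ℝ :=
  ∑' m : ℕ, q ^ ((k - 1) * (m + 1)) / (qint q (m + 1)) ^ k

/-- Depth-two qMZV: sum over m₁ > m₂ ≥ 1, parametrized by m₂ = p.2+1, m₁ = p.2+p.1+2. -/
noncomputable def zetaQ2 (q : ℝ) (k₁ k₂ : ℕ) : ℝ :=
  ∑' p : ℕ × ℕ,
    q ^ ((k₁ - 1) * (p.2 + p.1 + 2) + (k₂ - 1) * (p.2 + 1)) /
      ((qint q (p.2 + p.1 + 2)) ^ k₁ * (qint q (p.2 + 1)) ^ k₂)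

/-- Depth-two qMZSV: sum over m₁ ≥ m₂ ≥ 1, parametrized by m₂ = p.2+1, m₁ = p.2+p.1+1. -/
noncomputable def zetaQStar2 (q : ℝ) (k₁ k₂ : ℕ) : ℝ :=
  ∑' p : ℕ × ℕ,
    q ^ ((k₁ - 1) * (p.2 + p.1 + 1) + (k₂ - 1) * (p.2 + 1)) /
      ((qint q (p.2 + p.1 + 1)) ^ k₁ * (qint q (p.2 + 1)) ^ k₂)

/-- Interpolated q-double zeta value. -/
noncomputable def zetaQT (q t : ℝ) (k₁ k₂ : ℕ) : ℝ :=
  zetaQ2 q k₁ k₂ + t * (zetaQ q (k₁ + k₂) + (1 - q) * zetaQ q (k₁ + k₂ - 1))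

/-!
Multiply the two series and split the resulting double sum over pairs `(m, n)` according to
`m > n`, `m < n` and `m = n`. The two off-diagonal parts are `ζ_q(i,j)` and `ζ_q(j,i)`. On the
diagonal, the identity `q^m + (1 - q)[m] = 1` splits each product of terms into the corresponding
terms of `ζ_q(i+j)` and `(1 - q) ζ_q(i+j-1)`.
-/

def natPairTrichotomy : (ℕ × ℕ ⊕ ℕ × ℕ) ⊕ ℕ → ℕ × ℕ :=
  Sum.elim (Sum.elim (fun p ↦ (p.2 + p.1 + 1, p.2)) (fun p ↦ (p.2, p.2 + p.1 + 1))) (fun n ↦ (n, n))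

lemma bijective_natPairTrichotomy : Function.Bijective natPairTrichotomy := by
  refine ⟨.sumElim (.sumElim ?_ ?_ ?_) ?_ ?_, ?_⟩
  · rintro ⟨a, b⟩ ⟨c, d⟩ h
    simp only [Prod.mk.injEq] at h
    ext <;> omega
  · rintro ⟨a, b⟩ ⟨c, d⟩ h
    simp only [Prod.mk.injEq] at h
    ext <;> omega
  · simp only [ne_eq, Prod.mk.injEq, Prod.forall]
    omega
  · exact fun _ _ h ↦ (Prod.mk.inj h).1
  · rintro (_ | _) _ <;> simp only [Sum.elim_inl, Sum.elim_inr, ne_eq, Prod.mk.injEq, not_and] <;>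
      omega
  · rintro ⟨m, n⟩
    rcases lt_trichotomy n m with h | rfl | h
    · exact ⟨.inl (.inl (m - n - 1, n)), by simp [natPairTrichotomy]; omega⟩
    · exact ⟨.inr n, rfl⟩
    · exact ⟨.inl (.inr (n - m - 1, m)), by simp [natPairTrichotomy]; omega⟩

theorem Summable.tsum_prod_nat_eq_add_add_diag {α : Type*} [AddCommGroup α] [UniformSpace α]
    [IsUniformAddGroup α] [CompleteSpace α] [T2Space α] {F : ℕ × ℕ → α} (hF : Summable F) :
    ∑' p, F p = ∑' p : ℕ × ℕ, F (p.2 + p.1 + 1, p.2) + ∑' p : ℕ × ℕ, F (p.2, p.2 + p.1 + 1) +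
      ∑' n, F (n, n) := by
  have hbij := bijective_natPairTrichotomy
  have hS : Summable (F ∘ natPairTrichotomy) := hF.comp_injective hbij.injective
  have hSl : Summable ((F ∘ natPairTrichotomy) ∘ Sum.inl) := hS.comp_injective Sum.inl_injective
  have hcover := hbij.injective.tsum_eq (f := F) (by simp [hbij.surjective.range_eq])
  -- `hS.tsum_sum` would feed `hS` to the wrong argument and make Lean unfold `natPairTrichotomy`
  have hsplit := Summable.tsum_sum hSl (hS.comp_injective Sum.inr_injective)
  have hsplitl := Summable.tsum_sum (hSl.comp_injective Sum.inl_injective)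
    (hSl.comp_injective Sum.inr_injective)
  rw [← hcover]
  exact hsplit.trans (congrArg (· + _) hsplitl)

section QZeta

variable {q : ℝ}

lemma qint_eq_geom_sum (hq : q ≠ 1) (m : ℕ) : qint q m = ∑ l ∈ Finset.range m, q ^ l := by
  rw [qint, geom_sum_eq hq, ← neg_div_neg_eq, neg_sub, neg_sub]

lemma one_le_qint (hq0 : 0 ≤ q) (hq1 : q ≠ 1) {m : ℕ} (hm : m ≠ 0) : 1 ≤ qint q m := by
  rw [qint_eq_geom_sum hq1, ← Nat.succ_pred_eq_of_ne_zero hm, Finset.sum_range_succ']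
  simpa using Finset.sum_nonneg fun l _ ↦ pow_nonneg hq0 (l + 1)

lemma pow_add_one_sub_mul_qint (hq : q ≠ 1) (m : ℕ) : q ^ m + (1 - q) * qint q m = 1 := by
  rw [qint, mul_div_cancel₀ _ (sub_ne_zero.2 hq.symm)]
  ring

noncomputable def zetaQTerm (q : ℝ) (k m : ℕ) : ℝ := q ^ ((k - 1) * m) / qint q m ^ k

lemma zetaQ_eq_tsum_zetaQTerm (q : ℝ) (k : ℕ) : zetaQ q k = ∑' m, zetaQTerm q k (m + 1) := rfl

lemma zetaQ2_eq_tsum_zetaQTerm_mul (q : ℝ) (k₁ k₂ : ℕ) :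
    zetaQ2 q k₁ k₂ = ∑' p : ℕ × ℕ, zetaQTerm q k₁ (p.2 + p.1 + 2) * zetaQTerm q k₂ (p.2 + 1) := by
  simp only [zetaQ2, zetaQTerm, div_mul_div_comm, pow_add]

lemma zetaQTerm_nonneg (hq0 : 0 ≤ q) (hq1 : q ≠ 1) (k m : ℕ) : 0 ≤ zetaQTerm q k m := by
  rw [zetaQTerm, qint_eq_geom_sum hq1]
  have := Finset.sum_nonneg fun l (_ : l ∈ Finset.range m) ↦ pow_nonneg hq0 l
  positivity

lemma zetaQTerm_le_pow (hq0 : 0 ≤ q) (hq1 : q < 1) {k m : ℕ} (hk : 2 ≤ k) (hm : m ≠ 0) :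
    zetaQTerm q k m ≤ q ^ m :=
  calc zetaQTerm q k m ≤ q ^ ((k - 1) * m) :=
        div_le_self (pow_nonneg hq0 _) (one_le_pow₀ (one_le_qint hq0 hq1.ne hm))
    _ ≤ q ^ m := pow_le_pow_of_le_one hq0 hq1.le (Nat.le_mul_of_pos_left m (by omega))

lemma summable_zetaQTerm (hq0 : 0 ≤ q) (hq1 : q < 1) {k : ℕ} (hk : 2 ≤ k) :
    Summable fun m ↦ zetaQTerm q k (m + 1) :=
  .of_nonneg_of_le (fun m ↦ zetaQTerm_nonneg hq0 hq1.ne k (m + 1))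
    (fun m ↦ zetaQTerm_le_pow hq0 hq1 hk m.succ_ne_zero)
    ((summable_nat_add_iff 1).2 (summable_geometric_of_lt_one hq0 hq1))

lemma zetaQTerm_mul_zetaQTerm (hq0 : 0 ≤ q) (hq1 : q ≠ 1) {k₁ k₂ m : ℕ} (hk₁ : 1 ≤ k₁)
    (hk₂ : 1 ≤ k₂) (hm : m ≠ 0) :
    zetaQTerm q k₁ m * zetaQTerm q k₂ m =
      zetaQTerm q (k₁ + k₂) m + (1 - q) * zetaQTerm q (k₁ + k₂ - 1) m := by
  obtain ⟨a, rfl⟩ := Nat.exists_eq_add_of_le' hk₁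
  obtain ⟨b, rfl⟩ := Nat.exists_eq_add_of_le' hk₂
  have hx : qint q m ≠ 0 := (zero_lt_one.trans_le (one_le_qint hq0 hq1 hm)).ne'
  have h := pow_add_one_sub_mul_qint hq1 m
  rw [show a + 1 + (b + 1) - 1 = a + b + 1 by omega, show a + 1 + (b + 1) = a + b + 2 by omega]
  simp only [zetaQTerm, Nat.add_sub_cancel, show a + b + 2 - 1 = a + b + 1 by omega, mul_comm _ m,
    pow_mul]
  generalize q ^ m = y at h ⊢
  calc y ^ a / qint q m ^ (a + 1) * (y ^ b / qint q m ^ (b + 1))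
      = y ^ (a + b) / qint q m ^ (a + b + 2) * (y + (1 - q) * qint q m) := by rw [h]; ring
    _ = _ := by field_simp; ring

end QZeta

theorem stmt_4 (q : ℝ) (hq0 : 0 < q) (hq1 : q < 1) (i j : ℕ) (hi : 2 ≤ i) (hj : 2 ≤ j) :
    zetaQ q i * zetaQ q j =
      zetaQ2 q i j + zetaQ2 q j i + zetaQ q (i + j) + (1 - q) * zetaQ q (i + j - 1) := by
  have hsum {k : ℕ} (hk : 2 ≤ k) := summable_zetaQTerm hq0.le hq1 hk
  have hnonneg (k : ℕ) : 0 ≤ fun m ↦ zetaQTerm q k (m + 1) :=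
    fun m ↦ zetaQTerm_nonneg hq0.le hq1.ne k (m + 1)
  have hprod := (hsum hi).mul_of_nonneg (hsum hj) (hnonneg i) (hnonneg j)
  have hdiag (n : ℕ) := zetaQTerm_mul_zetaQTerm hq0.le hq1.ne (k₁ := i) (k₂ := j) (by omega)
    (by omega) n.succ_ne_zero
  simp only [zetaQ_eq_tsum_zetaQTerm, zetaQ2_eq_tsum_zetaQTerm_mul]
  rw [(hsum hi).tsum_mul_tsum (hsum hj) hprod, hprod.tsum_prod_nat_eq_add_add_diag,
    tsum_congr hdiag, Summable.tsum_add (hsum (by omega)) ((hsum (by omega)).mul_left _),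
    tsum_mul_left]
  simp only [mul_comm (zetaQTerm q i _)]
  ring
end

section
/- Let H = R⟨x,y⟩ be the free associative algebra over a commutative ring R containing elements t and h, let z_j = x^{j-1}y, and let S be the R-linear map on the span of words ending in y (together with 1) defined recursively by S(1) = 1 and S(z_k w) = z_k S(w) + t·(z_k ∘ S(w)) for words w, where z_i ∘ (z_j v) = (z_{i+j} + h·z_{i+j-1})·v and z_i ∘ 1 = 0. Then for every word w in H, S(w·y) = γ(w)·y, where γ is the algebra endomorphism with γ(x) = x and γ(y) = t·x + y + h·t. -/
open Finsupp

/-- H¹ = R·1 + R⟨x,y⟩·y modeled as the free R-module on words z_{k₁}⋯z_{k_l},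
i.e. on lists [k₁,…,k_l] of (positive) natural numbers; z_j = x^{j-1} y. -/
abbrev Hone (R : Type*) [CommRing R] := List ℕ →₀ R

/-- The circle product on words: z_i ∘ (z_j v) = (z_{i+j} + h·z_{i+j-1}) v,
zero unless the left factor has depth 1 and the right factor is a nonempty word. -/
noncomputable def circW (R : Type*) [CommRing R] (h : R) : List ℕ → List ℕ → Hone R
  | [i], j :: v =>
      Finsupp.single ((i + j) :: v) 1 + Finsupp.single ((i + j - 1) :: v) h
  | _, _ => 0

/-- Bilinear extension of the circle product to H¹. -/
noncomputable def circ (R : Type*) [CommRing R] (h : R) (a w : Hone R) : Hone R :=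
  a.sum fun u cu => w.sum fun v cv => (cu * cv) • circW R h u v

/-- S on words: S(1) = 1, S(z_k w) = z_k S(w) + t·(z_k ∘ S(w)). -/
noncomputable def SW (R : Type*) [CommRing R] (t h : R) : List ℕ → Hone R
  | [] => Finsupp.single [] 1
  | k :: w => (SW R t h w).sum fun u c =>
      c • (Finsupp.single (k :: u) (1 : R) + t • circW R h [k] u)

/-- R-linear extension of S to H¹. -/
noncomputable def Smap (R : Type*) [CommRing R] (t h : R) (f : Hone R) : Hone R :=
  f.sum fun w c => c • SW R t h w

/-- x, the first generator of the free algebra R⟨x,y⟩ (on Bool: false ↦ x, true ↦ y). -/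
noncomputable def Xg (R : Type*) [CommRing R] : FreeAlgebra R Bool := FreeAlgebra.ι R false

/-- y, the second generator. -/
noncomputable def Yg (R : Type*) [CommRing R] : FreeAlgebra R Bool := FreeAlgebra.ι R true

/-- The word z_{k₁}⋯z_{k_l} as an element of R⟨x,y⟩, z_j = x^{j-1} y. -/
noncomputable def wordAlg (R : Type*) [CommRing R] : List ℕ → FreeAlgebra R Bool
  | [] => 1
  | k :: w => Xg R ^ (k - 1) * Yg R * wordAlg R w

/-- For a nonempty ks, the word w with z_{k₁}⋯z_{k_l} = w·y,
i.e. w = x^{k₁-1} y ⋯ y x^{k_l - 1}. -/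
noncomputable def preAlg (R : Type*) [CommRing R] : List ℕ → FreeAlgebra R Bool
  | [] => 1
  | [k] => Xg R ^ (k - 1)
  | k :: w => Xg R ^ (k - 1) * Yg R * preAlg R w

/-- The identification of the word model H¹ with R·1 + R⟨x,y⟩·y ⊆ R⟨x,y⟩. -/
noncomputable def toAlg (R : Type*) [CommRing R] (f : Hone R) : FreeAlgebra R Bool :=
  f.sum fun w c => c • wordAlg R w

/-- The algebra endomorphism γ of R⟨x,y⟩ with γ(x) = x and γ(y) = t·x + y + h·t·1. -/
noncomputable def gammaMap (R : Type*) [CommRing R] (t h : R) :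
    FreeAlgebra R Bool →ₐ[R] FreeAlgebra R Bool :=
  FreeAlgebra.lift R fun b : Bool =>
    if b then t • Xg R + Yg R + (h * t) • (1 : FreeAlgebra R Bool) else Xg R

-- AUX
section Aux
variable (R : Type*) [CommRing R] (t h : R)

lemma toAlg_eq (f : Hone R) : toAlg R f = Finsupp.linearCombination R (wordAlg R) f := rfl

lemma toAlg_single (w : List ℕ) (c : R) : toAlg R (Finsupp.single w c) = c • wordAlg R w := by
  simp [toAlg_eq]

lemma gamma_X : gammaMap R t h (Xg R) = Xg R := by
  simp [gammaMap, Xg, FreeAlgebra.lift_ι_apply]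

lemma gamma_Y : gammaMap R t h (Yg R) =
    t • Xg R + Yg R + (h * t) • (1 : FreeAlgebra R Bool) := by
  simp [gammaMap, Yg, FreeAlgebra.lift_ι_apply]

lemma SW_nil : SW R t h [] = Finsupp.single [] 1 := rfl

lemma SW_cons (k : ℕ) (w : List ℕ) : SW R t h (k :: w) = (SW R t h w).sum fun u c =>
    c • (Finsupp.single (k :: u) (1 : R) + t • circW R h [k] u) := rfl

lemma circW_nil (k : ℕ) : circW R h [k] [] = 0 := rfl

lemma circW_cons (k j : ℕ) (v : List ℕ) : circW R h [k] (j :: v) =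
    Finsupp.single ((k + j) :: v) 1 + Finsupp.single ((k + j - 1) :: v) h := rfl

lemma headPos : ∀ (ks : List ℕ), ks ≠ [] → (∀ k ∈ ks, 1 ≤ k) →
    ∀ u ∈ (SW R t h ks).support, ∃ j v, u = j :: v ∧ 1 ≤ j := by
  intro ks
  induction ks with
  | nil => simp
  | cons k w ih =>
    intro _ hpos u hu
    have hk : 1 ≤ k := hpos k (by simp)
    rw [SW_cons] at hu
    obtain ⟨a, ha, hu⟩ := Finset.mem_biUnion.mp (Finsupp.support_sum hu)
    have hu2 : u ∈ (Finsupp.single (k :: a) (1 : R) + t • circW R h [k] a).support :=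
      Finsupp.support_smul hu
    rcases Finset.mem_union.mp (Finsupp.support_add hu2) with h1 | h2
    · have := Finsupp.support_single_subset h1
      simp only [Finset.mem_singleton] at this
      exact ⟨k, a, this, hk⟩
    · have h2' : u ∈ (circW R h [k] a).support := Finsupp.support_smul h2
      rcases a with _ | ⟨j, v⟩
      · rw [circW_nil] at h2'; simp at h2'
      · have hj : 1 ≤ j := by
          rcases w with _ | ⟨k', w'⟩
          · rw [SW_nil] at ha
            have := Finsupp.support_single_subset ha
            simp at this
          · obtain ⟨j', v', he, hj'⟩ := ih (by simp)
              (fun x hx => hpos x (List.mem_cons_of_mem _ hx)) _ ha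
            rw [List.cons.injEq] at he
            exact he.1 ▸ hj'
        rw [circW_cons] at h2'
        rcases Finset.mem_union.mp (Finsupp.support_add h2') with h3 | h3
        · have := Finsupp.support_single_subset h3
          simp only [Finset.mem_singleton] at this
          exact ⟨k + j, v, this, by omega⟩
        · have := Finsupp.support_single_subset h3
          simp only [Finset.mem_singleton] at this
          exact ⟨k + j - 1, v, this, by omega⟩
end Aux
section
variable {A : Type*} [Ring A] {R : Type*} [CommRing R] [Algebra R A]

lemma alg_id (X Y w : A) (a b : ℕ) (t h : R) :
    X ^ a * Y * (X ^ b * Y * w) + t • (X ^ (a + b + 1) * Y * w) +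
      (t * h) • (X ^ (a + b) * Y * w)
      = X ^ a * (t • X + Y + (h * t) • 1) * (X ^ b * Y * w) := by
  have e1 : X ^ (a + b + 1) = X ^ a * X * X ^ b := by
    rw [show a + b + 1 = a + 1 + b by omega, pow_add, pow_succ]
  have e2 : X ^ (a + b) = X ^ a * X ^ b := pow_add X a b
  rw [e1, e2]
  simp only [mul_add, add_mul, smul_mul_assoc, mul_smul_comm, mul_one, one_mul, smul_smul,
    mul_assoc]
  rw [mul_comm h t]
  abel
end

section Main
variable (R : Type*) [CommRing R] (t h : R)

lemma wordAlg_cons (k : ℕ) (v : List ℕ) :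
    wordAlg R (k :: v) = Xg R ^ (k - 1) * Yg R * wordAlg R v := rfl

lemma point (k j : ℕ) (hk : 1 ≤ k) (hj : 1 ≤ j) (v : List ℕ) :
    toAlg R (Finsupp.single (k :: j :: v) (1 : R) + t • circW R h [k] (j :: v))
      = Xg R ^ (k - 1) * (t • Xg R + Yg R + (h * t) • 1) * wordAlg R (j :: v) := by
  obtain ⟨a, rfl⟩ : ∃ a, k = a + 1 := ⟨k - 1, by omega⟩
  obtain ⟨b, rfl⟩ : ∃ b, j = b + 1 := ⟨j - 1, by omega⟩
  rw [circW_cons, toAlg_eq]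
  simp only [map_add, map_smul, Finsupp.linearCombination_single]
  rw [show a + 1 + (b + 1) = a + b + 2 by omega]
  rw [wordAlg_cons, wordAlg_cons, wordAlg_cons, wordAlg_cons]
  simp only [Nat.add_sub_cancel, show a + b + 2 - 1 = a + b + 1 by omega,
    show a + b + 2 - 1 - 1 = a + b by omega, one_smul, smul_add, smul_smul]
  rw [← add_assoc]
  exact alg_id (Xg R) (Yg R) (wordAlg R v) a b t h

theorem SW_eq_gamma (ks : List ℕ) (hne : ks ≠ [])
    (hpos : ∀ k ∈ ks, 1 ≤ k) :
    toAlg R (SW R t h ks) = gammaMap R t h (preAlg R ks) * Yg R := by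
  induction ks with
  | nil => exact absurd rfl hne
  | cons k w ih =>
    have hk : 1 ≤ k := hpos k (by simp)
    rcases w with _ | ⟨k', w'⟩
    · -- base case [k]
      have hsw : SW R t h [k] = Finsupp.single [k] (1 : R) := by
        rw [SW_cons, SW_nil, Finsupp.sum_single_index (by simp)]
        simp [circW_nil]
      rw [hsw, toAlg_single, one_smul, wordAlg_cons]
      show _ = gammaMap R t h (Xg R ^ (k - 1)) * Yg R
      rw [map_pow, gamma_X]
      simp [wordAlg]
    · have IH := ih (by simp) (fun x hx => hpos x (List.mem_cons_of_mem _ hx))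
      set w := k' :: w' with hw
      rw [SW_cons, toAlg_eq, map_finsuppSum]
      have step : ((SW R t h w).sum fun u c =>
          (Finsupp.linearCombination R (wordAlg R))
            (c • (Finsupp.single (k :: u) (1 : R) + t • circW R h [k] u)))
          = (SW R t h w).sum fun u c =>
            c • (Xg R ^ (k - 1) * (t • Xg R + Yg R + (h * t) • 1) * wordAlg R u) := by
        apply Finsupp.sum_congr
        intro u hu
        obtain ⟨j, v, rfl, hj⟩ := headPos R t h w (by simp [hw]) (fun x hx => hpos x (List.mem_cons_of_mem _ hx)) u hu
        rw [map_smul, ← toAlg_eq, point R t h k j hk hj v]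
      rw [step]
      have step2 : ((SW R t h w).sum fun u c =>
          c • (Xg R ^ (k - 1) * (t • Xg R + Yg R + (h * t) • 1) * wordAlg R u))
          = Xg R ^ (k - 1) * (t • Xg R + Yg R + (h * t) • 1) * toAlg R (SW R t h w) := by
        rw [toAlg, Finsupp.mul_sum]
        exact Finsupp.sum_congr fun u _ => (mul_smul_comm _ _ _).symm
      rw [step2, IH]
      have hpre : preAlg R (k :: w) = Xg R ^ (k - 1) * Yg R * preAlg R w := by
        rw [hw]; rfl
      rw [hpre]
      rw [map_mul, map_mul, map_pow, gamma_X, gamma_Y]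
      rw [mul_assoc, mul_assoc, mul_assoc]
end Main


theorem stmt_12 (R : Type*) [CommRing R] (t h : R) (ks : List ℕ) (hne : ks ≠ [])
    (hpos : ∀ k ∈ ks, 1 ≤ k) :
    toAlg R (SW R t h ks) = gammaMap R t h (preAlg R ks) * Yg R := by
  exact SW_eq_gamma R t h ks hne hpos
end

section
/- The interpolated harmonic product ⋆ on H^1 is commutative: for all u, v in H^1, u ⋆ v = v ⋆ u. -/
open Finsupp

/-- z_j ∘ (−) as an operation on H¹. -/
noncomputable def circOne (R : Type*) [CommRing R] (h : R) (j : ℕ) (f : Hone R) : Hone R :=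
  f.sum fun v c => c • circW R h [j] v

/-- The interpolated harmonic product ⋆ on words. -/
noncomputable def starW (R : Type*) [CommRing R] (t h : R) : List ℕ → List ℕ → Hone R
  | [], w => Finsupp.single w 1
  | i :: u, [] => Finsupp.single (i :: u) 1
  | i :: u, j :: v =>
      Finsupp.mapDomain (List.cons i) (starW R t h u (j :: v)) +
      Finsupp.mapDomain (List.cons j) (starW R t h (i :: u) v) +
      (1 - 2 * t) • (Finsupp.mapDomain (List.cons (i + j)) (starW R t h u v) +
        h • Finsupp.mapDomain (List.cons (i + j - 1)) (starW R t h u v)) +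
      (t ^ 2 - t) • circOne R h i (circOne R h j (starW R t h u v))
  termination_by u v => u.length + v.length
  decreasing_by all_goals (simp; try omega)

/-- Bilinear extension of ⋆ to H¹. -/
noncomputable def starP (R : Type*) [CommRing R] (t h : R) (f g : Hone R) : Hone R :=
  f.sum fun u cu => g.sum fun v cv => (cu * cv) • starW R t h u v

/-!
The defining recursion of `⋆` is symmetric in its two arguments except for the last term
`z_i ∘ (z_j ∘ (u ⋆ v))`, so commutativity follows by induction on the total length once the
operators `z_i ∘ -` and `z_j ∘ -` commute. On a word `z_a v` both composites give
`(z_{i+j+a} + 2h z_{i+j+a-1} + h² z_{i+j+a-2}) v`; this needs `1 ≤ i, j`, since otherwise the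
truncated subtraction in `z_{i+j-1}` breaks the symmetry.
-/

section Circle

variable {R : Type*} [CommRing R] (h : R)

theorem circOne_eq_linearCombination (j : ℕ) :
    circOne R h j = linearCombination R (circW R h [j]) := by
  ext1 f
  rw [linearCombination_apply]
  rfl

theorem circOne_single_nil (j : ℕ) (c : R) : circOne R h j (single [] c) = 0 := by
  simp [circOne_eq_linearCombination, circW]

theorem circOne_single_cons (j a : ℕ) (v : List ℕ) (c : R) :
    circOne R h j (single (a :: v) c) =
      c • (single ((j + a) :: v) 1 + h • single ((j + a - 1) :: v) 1) := by
  simp [circOne_eq_linearCombination, circW]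

theorem circOne_circOne_single_cons {i j a : ℕ} (hja : 1 ≤ j + a) (v : List ℕ) (c : R) :
    circOne R h i (circOne R h j (single (a :: v) c)) =
      c • (single ((i + j + a) :: v) 1 + (2 * h) • single ((i + j + a - 1) :: v) 1 +
        h ^ 2 • single ((i + j + a - 2) :: v) 1) := by
  have h₁ : i + (j + a - 1) = i + j + a - 1 := by omega
  have h₂ : i + j + a - 1 - 1 = i + j + a - 2 := by omega
  rw [circOne_single_cons, circOne_eq_linearCombination]
  simp only [map_smul, map_add, ← circOne_eq_linearCombination, circOne_single_cons, h₁, h₂,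
    ← add_assoc]
  module

theorem circOne_comm {i j : ℕ} (hi : 1 ≤ i) (hj : 1 ≤ j) (f : Hone R) :
    circOne R h i (circOne R h j f) = circOne R h j (circOne R h i f) := by
  simp only [circOne_eq_linearCombination, ← LinearMap.comp_apply]
  congr 1
  refine lhom_ext fun w c => ?_
  simp only [LinearMap.comp_apply, ← circOne_eq_linearCombination]
  cases w with
  | nil => simp [circOne_single_nil, circOne_eq_linearCombination]
  | cons a v =>
    rw [circOne_circOne_single_cons h (by omega), circOne_circOne_single_cons h (by omega),
      Nat.add_comm j i]

end Circle

theorem starW_comm {R : Type*} [CommRing R] (t h : R) :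
    ∀ u v : List ℕ, (∀ k ∈ u, 1 ≤ k) → (∀ k ∈ v, 1 ≤ k) → starW R t h u v = starW R t h v u
  | [], [], _, _ => rfl
  | [], _ :: _, _, _ | _ :: _, [], _, _ => by rw [starW, starW]
  | i :: u, j :: v, hiu, hjv => by
    have hi := hiu i List.mem_cons_self
    have hj := hjv j List.mem_cons_self
    have hu : ∀ k ∈ u, 1 ≤ k := fun k hk => hiu k (List.mem_cons_of_mem i hk)
    have hv : ∀ k ∈ v, 1 ≤ k := fun k hk => hjv k (List.mem_cons_of_mem j hk)
    rw [starW, starW, starW_comm t h u (j :: v) hu hjv, starW_comm t h (i :: u) v hiu hv,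
      starW_comm t h u v hu hv, Nat.add_comm j i, circOne_comm h hi hj]
    abel
  termination_by u v => u.length + v.length

theorem stmt_15 (R : Type*) [CommRing R] (t h : R) (f g : Hone R)
    (hf : ∀ u ∈ f.support, ∀ k ∈ u, 1 ≤ k)
    (hg : ∀ u ∈ g.support, ∀ k ∈ u, 1 ≤ k) :
    starP R t h f g = starP R t h g f := by
  rw [starP, starP, Finsupp.sum_comm]
  refine Finsupp.sum_congr fun v hv => Finsupp.sum_congr fun u hu => ?_
  rw [mul_comm, starW_comm t h u v (hf u hu) (hg v hv)]
end

section
/- With notation as in the definition of ρ_{1,t}: for any word w = u_1 u_2 ··· u_l in H = R⟨x,y⟩ with each u_i ∈ {x,y}, ρ_{1,t}(w) = Σ_{i=1}^{l} sgn(u_i)·x·γ^{-1}(u_{i+1}···u_l u_1···u_{i-1})·y, where sgn(x) = 1, sgn(y) = -1. In particular, ρ_{1,t} takes equal values on words that are cyclic permutations of each other. -/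
open scoped TensorProduct

/-- A word in the letters x, y as an element of R⟨x,y⟩. -/
noncomputable def algOf (R : Type*) [CommRing R] (w : List Bool) : FreeAlgebra R Bool :=
  (w.map (FreeAlgebra.ι R)).prod

/-- sgn(x) = 1, sgn(y) = -1. -/
def sgn (R : Type*) [CommRing R] (u : Bool) : R := if u then -1 else 1

/-- γ⁻¹: the algebra endomorphism with x ↦ x and y ↦ -t·x + y - h·t·1,
the inverse of γ (which sends x ↦ x, y ↦ t·x + y + h·t·1). -/
noncomputable def gammaInvMap (R : Type*) [CommRing R] (t h : R) :
    FreeAlgebra R Bool →ₐ[R] FreeAlgebra R Bool :=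
  FreeAlgebra.lift R fun b : Bool =>
    if b then -(t • Xg R) + Yg R - (h * t) • (1 : FreeAlgebra R Bool) else Xg R

/-- The map C on words, defined by C(x) = -C(y) = x⊗y and the Leibniz rule
C(vw) = C(v)⋄γ⁻¹(w) + γ⁻¹(v)⋄C(w), where a⋄(w₁⊗w₂) = w₁⊗(a·w₂) and
(w₁⊗w₂)⋄b = (w₁·b)⊗w₂. -/
noncomputable def Cw (R : Type*) [CommRing R] (t h : R) :
    List Bool → FreeAlgebra R Bool ⊗[R] FreeAlgebra R Bool
  | [] => 0
  | u :: w =>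
      sgn R u • ((Xg R * gammaInvMap R t h (algOf R w)) ⊗ₜ[R] Yg R) +
      TensorProduct.map LinearMap.id
        (LinearMap.mulLeft R (gammaInvMap R t h (FreeAlgebra.ι R u))) (Cw R t h w)

/-- ρ_{1,t} = M ∘ C, where M is multiplication. -/
noncomputable def rho1 (R : Type*) [CommRing R] (t h : R) (w : List Bool) :
    FreeAlgebra R Bool :=
  LinearMap.mul' R (FreeAlgebra R Bool) (Cw R t h w)

section aux
variable (R : Type*) [CommRing R] (t h : R)

lemma algOf_nil : algOf R ([] : List Bool) = 1 := rfl
lemma algOf_cons (u : Bool) (w : List Bool) :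
    algOf R (u :: w) = FreeAlgebra.ι R u * algOf R w := by simp [algOf]
lemma algOf_append (a b : List Bool) :
    algOf R (a ++ b) = algOf R a * algOf R b := by simp [algOf]

noncomputable def Fterm (w : List Bool) (i : ℕ) : FreeAlgebra R Bool :=
  sgn R (w.getD i false) •
    (Xg R * gammaInvMap R t h (algOf R (w.drop (i+1) ++ w.take i)) * Yg R)

lemma Cw_eq (w : List Bool) :
    Cw R t h w = ∑ i ∈ Finset.range w.length,
      sgn R (w.getD i false) •
        ((Xg R * gammaInvMap R t h (algOf R (w.drop (i+1)))) ⊗ₜ[R]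
          (gammaInvMap R t h (algOf R (w.take i)) * Yg R)) := by
  induction w with
  | nil => simp [Cw]
  | cons u w ih =>
    rw [Cw, ih, List.length_cons, Finset.sum_range_succ', map_sum, add_comm]
    simp [TensorProduct.map_tmul, algOf_cons, algOf_nil, map_mul, mul_assoc]

lemma rho1_eq (w : List Bool) :
    rho1 R t h w = ∑ i ∈ Finset.range w.length, Fterm R t h w i := by
  rw [rho1, Cw_eq, map_sum]
  simp [Fterm, LinearMap.mul'_apply, algOf_append, map_mul, mul_assoc]

end aux

section aux2
variable (R : Type*) [CommRing R] (t h : R)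

lemma rho1_rot (u : Bool) (w : List Bool) :
    rho1 R t h (u :: w) = rho1 R t h (w ++ [u]) := by
  rw [rho1_eq, rho1_eq]
  have hl : (w ++ [u]).length = w.length + 1 := by simp
  rw [List.length_cons, hl, Finset.sum_range_succ', Finset.sum_range_succ]
  congr 1
  · apply Finset.sum_congr rfl
    intro i hi
    rw [Finset.mem_range] at hi
    unfold Fterm
    have h1 : (u::w).getD (i+1) false = w.getD i false := rfl
    have h2 : (w ++ [u]).getD i false = w.getD i false := List.getD_append _ _ _ _ hi
    have h3 : (u::w).drop (i+1+1) = w.drop (i+1) := rfl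
    have h4 : (u::w).take (i+1) = u :: w.take i := rfl
    have h5 : (w ++ [u]).drop (i+1) = w.drop (i+1) ++ [u] :=
      List.drop_append_of_le_length (by omega)
    have h6 : (w ++ [u]).take i = w.take i := List.take_append_of_le_length (by omega)
    rw [h1, h2, h3, h4, h5, h6, List.append_assoc, List.singleton_append]
  · unfold Fterm
    have h1 : (u::w).getD 0 false = u := rfl
    have h2 : (w ++ [u]).getD w.length false = u := by
      rw [List.getD_eq_getElem _ _ (by simp)]
      simp
    have h3 : (w ++ [u]).drop (w.length + 1) = [] := by simp
    have h4 : (w ++ [u]).take w.length = w := by simp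
    rw [h1, h2, h3, h4]
    simp

lemma rho1_swap (w₁ w₂ : List Bool) :
    rho1 R t h (w₁ ++ w₂) = rho1 R t h (w₂ ++ w₁) := by
  induction w₁ generalizing w₂ with
  | nil => simp
  | cons a w₁ ih =>
    calc rho1 R t h ((a :: w₁) ++ w₂) = rho1 R t h ((w₁ ++ w₂) ++ [a]) := by
          rw [← rho1_rot]; rfl
      _ = rho1 R t h (w₁ ++ (w₂ ++ [a])) := by rw [List.append_assoc]
      _ = rho1 R t h ((w₂ ++ [a]) ++ w₁) := ih _
      _ = rho1 R t h (w₂ ++ (a :: w₁)) := by rw [List.append_assoc]; rfl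

end aux2


theorem stmt_16 (R : Type*) [CommRing R] (t h : R) :
    (∀ w : List Bool,
      rho1 R t h w = ∑ i : Fin w.length,
        sgn R (w.get i) •
          (Xg R * gammaInvMap R t h (algOf R (w.drop (i + 1) ++ w.take i)) * Yg R)) ∧
    (∀ w₁ w₂ : List Bool, rho1 R t h (w₁ ++ w₂) = rho1 R t h (w₂ ++ w₁)) := by
  constructor
  · intro w
    rw [rho1_eq, ← Fin.sum_univ_eq_sum_range (fun i => Fterm R t h w i) w.length]
    apply Finset.sum_congr rfl
    intro i _
    unfold Fterm
    rw [List.getD_eq_getElem _ _ i.isLt, List.get_eq_getElem]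
  · exact rho1_swap R t h
end
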